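/- arXiv:1210.6184 — 6 statements merged into one kernel-verified Lean document; each statement's English description precedes it below -/
import Mathlib

section
/- Let $(0 \le a_1 \le a_2 \le \cdots \le a_k)$ and $(0 \le b_1 \le b_2 \le \cdots \le b_k)$ be two weakly increasing sequences of nonnegative integers with $\sum_{j=1}^k a_j = \sum_{j=1}^k b_j$, and suppose $\sum_{j=1}^i a_j \le \sum_{j=1}^i b_j$ for all $1 \le i \le k$. Then $a_1 a_2 \cdots a_k \le b_1 b_2 \cdots b_k$. -/
/-!
If some `a j` vanishes there is nothing to prove; otherwise `b j ≥ b 0 ≥ a 0 > 0`. By summation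
by parts, prefix dominance with equal totals gives `∑ c j * a j ≤ ∑ c j * b j` for every antitone
weight `c`; with `c j = 1 / b j` this reads `∑ a j / b j ≤ k`. Then `t ≤ exp (t - 1)`, applied to
each ratio `a j / b j`, bounds `∏ a j / ∏ b j` by `exp 0 = 1`.
-/

open Finset

theorem Finset.sum_mul_le_sum_mul_of_partialSum_le {R : Type*} [CommRing R] [PartialOrder R]
    [IsOrderedRing R] (k : ℕ) (c x y : ℕ → R) (hc : ∀ i, i + 1 < k → c (i + 1) ≤ c i)
    (hdom : ∀ i ≤ k, ∑ j ∈ range i, x j ≤ ∑ j ∈ range i, y j)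
    (hsum : ∑ j ∈ range k, x j = ∑ j ∈ range k, y j) :
    ∑ j ∈ range k, c j * x j ≤ ∑ j ∈ range k, c j * y j := by
  have htotal : ∑ j ∈ range k, (y j - x j) = 0 := by rw [sum_sub_distrib, hsum, sub_self]
  have hparts := sum_range_by_parts c (fun j => y j - x j) k
  simp only [smul_eq_mul, htotal, mul_zero, zero_sub, sum_sub_distrib] at hparts
  rw [← sub_nonneg, ← sum_sub_distrib]
  simp only [← mul_sub, hparts, neg_nonneg]
  refine sum_nonpos fun i hi => mul_nonpos_of_nonpos_of_nonneg ?_ ?_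
  · exact sub_nonpos.mpr (hc i (by rw [mem_range] at hi; omega))
  · exact sub_nonneg.mpr (hdom (i + 1) (by rw [mem_range] at hi; omega))

theorem Finset.prod_le_prod_of_sum_div_le_card {ι : Type*} (s : Finset ι) (x y : ι → ℝ)
    (hx : ∀ i ∈ s, 0 ≤ x i) (hy : ∀ i ∈ s, 0 < y i) (h : ∑ i ∈ s, x i / y i ≤ #s) :
    ∏ i ∈ s, x i ≤ ∏ i ∈ s, y i := by
  have hy_prod : 0 < ∏ i ∈ s, y i := prod_pos hy
  rw [← div_le_one hy_prod, ← prod_div_distrib]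
  calc ∏ i ∈ s, x i / y i
      ≤ ∏ i ∈ s, Real.exp (x i / y i - 1) :=
        prod_le_prod (fun i hi => div_nonneg (hx i hi) (hy i hi).le) fun i _ => by
          linarith [Real.add_one_le_exp (x i / y i - 1)]
    _ = Real.exp (∑ i ∈ s, x i / y i - #s) := by
        rw [← Real.exp_sum, sum_sub_distrib, sum_const, nsmul_one]
    _ ≤ 1 := Real.exp_le_one_iff.mpr (sub_nonpos.mpr h)

theorem Finset.sum_div_le_of_partialSum_le (k : ℕ) (x y : ℕ → ℝ) (hy_pos : ∀ j < k, 0 < y j)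
    (hy : ∀ i, i + 1 < k → y i ≤ y (i + 1))
    (hdom : ∀ i ≤ k, ∑ j ∈ range i, x j ≤ ∑ j ∈ range i, y j)
    (hsum : ∑ j ∈ range k, x j = ∑ j ∈ range k, y j) :
    ∑ j ∈ range k, x j / y j ≤ k := by
  have key := sum_mul_le_sum_mul_of_partialSum_le k (fun j => 1 / y j) x y
    (fun i hi => one_div_le_one_div_of_le (hy_pos i (by omega)) (hy i hi)) hdom hsum
  calc ∑ j ∈ range k, x j / y j
      ≤ ∑ j ∈ range k, 1 / y j * y j := by simpa only [one_div_mul_eq_div] using key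
    _ = ∑ j ∈ range k, 1 := sum_congr rfl fun j hj =>
        one_div_mul_cancel (hy_pos j (mem_range.mp hj)).ne'
    _ = k := by simp

theorem stmt0_general (k : ℕ) (a b : ℕ → ℕ)
    (hb : ∀ i j, i ≤ j → j < k → b i ≤ b j)
    (hsum : ∑ j ∈ Finset.range k, a j = ∑ j ∈ Finset.range k, b j)
    (hdom : ∀ i ≤ k, ∑ j ∈ Finset.range i, a j ≤ ∑ j ∈ Finset.range i, b j) :
    ∏ j ∈ Finset.range k, a j ≤ ∏ j ∈ Finset.range k, b j := by
  by_cases ha_zero : ∃ j < k, a j = 0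
  · obtain ⟨j, hjk, hj⟩ := ha_zero
    rw [prod_eq_zero (mem_range.mpr hjk) hj]
    exact Nat.zero_le _
  push Not at ha_zero
  have hb_pos : ∀ j < k, 0 < b j := fun j hj => by
    have hab0 : a 0 ≤ b 0 := by simpa using hdom 1 (by omega)
    have ha0 : a 0 ≠ 0 := ha_zero 0 (by omega)
    have hb0j : b 0 ≤ b j := hb 0 j (Nat.zero_le j) hj
    omega
  have hratio : ∑ j ∈ range k, (a j : ℝ) / b j ≤ #(range k) := by
    rw [card_range]
    exact sum_div_le_of_partialSum_le k (fun j => a j) (fun j => b j)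
      (fun j hj => by exact_mod_cast hb_pos j hj)
      (fun i hi => by exact_mod_cast hb i (i + 1) (by omega) hi)
      (fun i hi => by exact_mod_cast hdom i hi) (by exact_mod_cast hsum)
  exact_mod_cast prod_le_prod_of_sum_div_le_card (range k) (fun j => (a j : ℝ))
    (fun j => b j) (fun j _ => Nat.cast_nonneg _)
    (fun j hj => by exact_mod_cast hb_pos j (mem_range.mp hj)) hratio

/-- Two weakly increasing sequences of nonnegative integers with equal total sum,
whose partial sums satisfy dominance, have comparable products. -/
theorem stmt0 (k : ℕ) (a b : ℕ → ℕ)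
    (ha : ∀ i j, i ≤ j → j < k → a i ≤ a j)
    (hb : ∀ i j, i ≤ j → j < k → b i ≤ b j)
    (hsum : ∑ j ∈ Finset.range k, a j = ∑ j ∈ Finset.range k, b j)
    (hdom : ∀ i ≤ k, ∑ j ∈ Finset.range i, a j ≤ ∑ j ∈ Finset.range i, b j) :
    ∏ j ∈ Finset.range k, a j ≤ ∏ j ∈ Finset.range k, b j :=
  stmt0_general k a b hb hsum hdom
end

section
/- Let $(0 \le a_1 \le \cdots \le a_k)$ and $(0 \le b_1 \le \cdots \le b_k)$ be weakly increasing sequences of nonnegative integers with equal total sum and $\sum_{j=1}^i a_j \le \sum_{j=1}^i b_j$ for all $i$. Then $\prod_{j=1}^k (a_j + 1) \le \prod_{j=1}^k (b_j + 1)$, with equality if and only if $a_j = b_j$ for all $j$. -/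
private lemma sl2_step (k : ℕ) (a b : ℕ → ℕ)
    (ha : ∀ i j, i ≤ j → j < k → a i ≤ a j)
    (hb : ∀ i j, i ≤ j → j < k → b i ≤ b j)
    (hsum : ∑ j ∈ Finset.range k, a j = ∑ j ∈ Finset.range k, b j)
    (hdom : ∀ i ≤ k, ∑ j ∈ Finset.range i, a j ≤ ∑ j ∈ Finset.range i, b j)
    (hne : ∃ j, j < k ∧ a j ≠ b j) :
    ∃ a' : ℕ → ℕ,
      (∀ i j, i ≤ j → j < k → a' i ≤ a' j) ∧
      (∑ j ∈ Finset.range k, a' j = ∑ j ∈ Finset.range k, b j) ∧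
      (∀ i ≤ k, ∑ j ∈ Finset.range i, a' j ≤ ∑ j ∈ Finset.range i, b j) ∧
      (∏ j ∈ Finset.range k, (a j + 1) < ∏ j ∈ Finset.range k, (a' j + 1)) ∧
      (∑ i ∈ Finset.range (k+1), (∑ j ∈ Finset.range i, b j - ∑ j ∈ Finset.range i, a' j)
        < ∑ i ∈ Finset.range (k+1), (∑ j ∈ Finset.range i, b j - ∑ j ∈ Finset.range i, a j)) := by
  classical
  -- p0 : first index where a and b differ
  obtain ⟨p0, ⟨hp0k, hp0ne⟩, hp0min⟩ :
      ∃ p0, (p0 < k ∧ a p0 ≠ b p0) ∧ ∀ m, m < p0 → ¬(m < k ∧ a m ≠ b m) :=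
    ⟨Nat.find hne, Nat.find_spec hne, fun m hm => Nat.find_min hne hm⟩
  have hpre : ∑ j ∈ Finset.range p0, a j = ∑ j ∈ Finset.range p0, b j := by
    refine Finset.sum_congr rfl (fun j hj => ?_)
    rw [Finset.mem_range] at hj
    by_contra hc
    exact hp0min j hj ⟨by omega, hc⟩
  have hap0 : a p0 < b p0 := by
    have h1 := hdom (p0+1) (by omega)
    rw [Finset.sum_range_succ, Finset.sum_range_succ, hpre] at h1
    omega
  -- p : last index of the block of value a p0
  have hPk : p0 < k ∧ a p0 = a p0 := ⟨hp0k, rfl⟩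
  obtain ⟨p, ⟨hpk, hap⟩, hple, hgt⟩ :
      ∃ p, (p < k ∧ a p = a p0) ∧ p0 ≤ p ∧ ∀ m, p < m → m ≤ k → ¬(m < k ∧ a m = a p0) :=
    ⟨Nat.findGreatest (fun m => m < k ∧ a m = a p0) k,
      Nat.findGreatest_spec (P := fun m => m < k ∧ a m = a p0) hp0k.le hPk,
      Nat.le_findGreatest (P := fun m => m < k ∧ a m = a p0) hp0k.le hPk,
      fun m hm hmk => Nat.findGreatest_is_greatest (P := fun m => m < k ∧ a m = a p0) hm hmk⟩
  have hbp : a p < b p := by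
    rw [hap]; exact lt_of_lt_of_le hap0 (hb p0 p hple hpk)
  have hApB : ∑ j ∈ Finset.range (p+1), a j < ∑ j ∈ Finset.range (p+1), b j := by
    have h1 := hdom p hpk.le
    rw [Finset.sum_range_succ, Finset.sum_range_succ]
    omega
  have hpk2 : p + 1 < k := by
    rcases Nat.lt_or_ge (p+1) k with h | h
    · exact h
    · exfalso
      have hk : p + 1 = k := by omega
      rw [hk] at hApB
      omega
  have hap1 : a p + 1 ≤ a (p+1) := by
    have h1 : ¬ (p + 1 < k ∧ a (p+1) = a p0) := hgt (p+1) (by omega) (by omega)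
    have h2 : a p ≤ a (p+1) := ha p (p+1) (by omega) hpk2
    have h3 : a (p+1) ≠ a p0 := fun hc => h1 ⟨hpk2, hc⟩
    omega
  -- q : first index after p where partial sums (up to q+1) agree again
  have hQk : p < k - 1 ∧ (∑ j ∈ Finset.range (k-1+1), a j = ∑ j ∈ Finset.range (k-1+1), b j) :=
    ⟨by omega, by rw [(by omega : k - 1 + 1 = k)]; exact hsum⟩
  have hQex : ∃ m, p < m ∧ ∑ j ∈ Finset.range (m+1), a j = ∑ j ∈ Finset.range (m+1), b j :=
    ⟨k-1, hQk⟩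
  obtain ⟨q, ⟨hpq, hABq⟩, hqle, hqmin⟩ :
      ∃ q, (p < q ∧ ∑ j ∈ Finset.range (q+1), a j = ∑ j ∈ Finset.range (q+1), b j) ∧ q ≤ k - 1 ∧
        ∀ m, m < q → ¬(p < m ∧ ∑ j ∈ Finset.range (m+1), a j = ∑ j ∈ Finset.range (m+1), b j) :=
    ⟨Nat.find hQex, Nat.find_spec hQex, Nat.find_min' hQex hQk, fun m hm => Nat.find_min hQex hm⟩
  have hqk : q < k := by omega
  have hAltB : ∀ i, p < i → i ≤ q → ∑ j ∈ Finset.range i, a j < ∑ j ∈ Finset.range i, b j := by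
    intro i hpi hiq
    by_cases hi : i = p + 1
    · rw [hi]; exact hApB
    · have h1 := hqmin (i-1) (by omega)
      have h2 : ¬ (∑ j ∈ Finset.range (i-1+1), a j = ∑ j ∈ Finset.range (i-1+1), b j) :=
        fun hc => h1 ⟨by omega, hc⟩
      rw [(by omega : i - 1 + 1 = i)] at h2
      have h3 := hdom i (by omega)
      omega
  -- key: a q ≥ a p + 2
  have haq : a p + 2 ≤ a q := by
    by_contra hc
    push_neg at hc
    have hconst : ∀ j, p < j → j ≤ q → a j = a p + 1 := by
      intro j hj1 hj2
      have h1 : a (p+1) ≤ a j := ha (p+1) j hj1 (by omega)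
      have h2 : a j ≤ a q := ha j q hj2 (by omega)
      omega
    have hsa := Finset.sum_range_add_sum_Ico a (show p + 1 ≤ q + 1 by omega)
    have hsb := Finset.sum_range_add_sum_Ico b (show p + 1 ≤ q + 1 by omega)
    have hca : ∑ j ∈ Finset.Ico (p+1) (q+1), a j = ∑ j ∈ Finset.Ico (p+1) (q+1), (a p + 1) :=
      Finset.sum_congr rfl (fun j hj => by
        rw [Finset.mem_Ico] at hj
        exact hconst j (by omega) (by omega))
    have hcb : ∑ j ∈ Finset.Ico (p+1) (q+1), (a p + 1) ≤ ∑ j ∈ Finset.Ico (p+1) (q+1), b j := by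
      refine Finset.sum_le_sum (fun j hj => ?_)
      rw [Finset.mem_Ico] at hj
      have h := hb p0 j (by omega) (by omega)
      omega
    omega
  -- r : first index after p with value a q
  have hRex : ∃ m, p < m ∧ a m = a q := ⟨q, hpq, rfl⟩
  obtain ⟨r, ⟨hpr, harq⟩, hrq, hrmin⟩ :
      ∃ r, (p < r ∧ a r = a q) ∧ r ≤ q ∧ ∀ m, m < r → ¬(p < m ∧ a m = a q) :=
    ⟨Nat.find hRex, Nat.find_spec hRex, Nat.find_min' hRex ⟨hpq, rfl⟩,
      fun m hm => Nat.find_min hRex hm⟩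
  have hrlt : ∀ m, p < m → m < r → a m < a q := by
    intro m h1 h2
    have h3 := hrmin m h2
    have h4 : a m ≤ a q := ha m q (by omega) (by omega)
    have h5 : a m ≠ a q := fun hc => h3 ⟨h1, hc⟩
    omega
  have har : a p + 2 ≤ a r := by omega
  have hrk : r < k := by omega
  -- the transferred sequence
  obtain ⟨a', hvp, hvr, hvo⟩ :
      ∃ a' : ℕ → ℕ, a' p = a p + 1 ∧ a' r = a r - 1 ∧ ∀ j, j ≠ p → j ≠ r → a' j = a j := by
    refine ⟨Function.update (Function.update a p (a p + 1)) r (a r - 1), ?_, ?_, ?_⟩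
    · rw [Function.update_of_ne (by omega), Function.update_self]
    · rw [Function.update_self]
    · intro j h1 h2
      rw [Function.update_of_ne h2, Function.update_of_ne h1]
  -- partial sums of a'
  have hS1 : ∀ i, i ≤ p → ∑ j ∈ Finset.range i, a' j = ∑ j ∈ Finset.range i, a j := by
    intro i hi
    exact Finset.sum_congr rfl (fun j hj => by
      rw [Finset.mem_range] at hj
      exact hvo j (by omega) (by omega))
  have hS2 : ∀ i, p < i → i ≤ r → ∑ j ∈ Finset.range i, a' j = ∑ j ∈ Finset.range i, a j + 1 := by
    intro i h1 h2
    have hpi : p ∈ Finset.range i := Finset.mem_range.mpr h1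
    have e1 : a' p + ∑ j ∈ (Finset.range i).erase p, a' j = ∑ j ∈ Finset.range i, a' j :=
      Finset.add_sum_erase _ a' hpi
    have e2 : a p + ∑ j ∈ (Finset.range i).erase p, a j = ∑ j ∈ Finset.range i, a j :=
      Finset.add_sum_erase _ a hpi
    have e3 : ∑ j ∈ (Finset.range i).erase p, a' j = ∑ j ∈ (Finset.range i).erase p, a j :=
      Finset.sum_congr rfl (fun j hj => by
        rw [Finset.mem_erase, Finset.mem_range] at hj
        exact hvo j hj.1 (by omega))
    omega
  have hS3 : ∀ i, r < i → ∑ j ∈ Finset.range i, a' j = ∑ j ∈ Finset.range i, a j := by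
    intro i h1
    have hri : r ∈ Finset.range i := Finset.mem_range.mpr h1
    have hpmem : p ∈ (Finset.range i).erase r :=
      Finset.mem_erase.mpr ⟨by omega, Finset.mem_range.mpr (by omega)⟩
    have e1 : a' r + ∑ j ∈ (Finset.range i).erase r, a' j = ∑ j ∈ Finset.range i, a' j :=
      Finset.add_sum_erase _ a' hri
    have e2 : a' p + ∑ j ∈ ((Finset.range i).erase r).erase p, a' j
        = ∑ j ∈ (Finset.range i).erase r, a' j :=
      Finset.add_sum_erase _ a' hpmem
    have e3 : a r + ∑ j ∈ (Finset.range i).erase r, a j = ∑ j ∈ Finset.range i, a j :=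
      Finset.add_sum_erase _ a hri
    have e4 : a p + ∑ j ∈ ((Finset.range i).erase r).erase p, a j
        = ∑ j ∈ (Finset.range i).erase r, a j :=
      Finset.add_sum_erase _ a hpmem
    have e5 : ∑ j ∈ ((Finset.range i).erase r).erase p, a' j
        = ∑ j ∈ ((Finset.range i).erase r).erase p, a j :=
      Finset.sum_congr rfl (fun j hj => by
        rw [Finset.mem_erase, Finset.mem_erase] at hj
        exact hvo j hj.1 hj.2.1)
    omega
  -- a' is sorted
  have haj : ∀ j, p < j → j < k → a p + 1 ≤ a j := fun j h1 h2 =>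
    le_trans hap1 (ha (p+1) j h1 h2)
  have hsorted' : ∀ i j, i ≤ j → j < k → a' i ≤ a' j := by
    intro i j hij hjk
    by_cases hip : i = p
    · by_cases hjr : j = r
      · rw [hip, hjr, hvp, hvr]
        omega
      · by_cases hjp : j = p
        · rw [hip, hjp]
        · rw [hip, hvp, hvo j hjp hjr]
          exact haj j (by omega) hjk
    · by_cases hir : i = r
      · by_cases hjr : j = r
        · rw [hir, hjr]
        · have hjp : j ≠ p := by omega
          rw [hir, hvr, hvo j hjp hjr]
          have h := ha r j (by omega) hjk
          omega
      · by_cases hjp : j = p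
        · rw [hjp, hvp, hvo i hip (by omega)]
          have h := ha i p (by omega) hpk
          omega
        · by_cases hjr : j = r
          · rw [hjr, hvr, hvo i hip hir]
            by_cases hi2 : i ≤ p
            · have h := ha i p hi2 hpk
              omega
            · have h := hrlt i (by omega) (by omega)
              omega
          · rw [hvo i hip hir, hvo j hjp hjr]
            exact ha i j hij hjk
  have hsum' : ∑ j ∈ Finset.range k, a' j = ∑ j ∈ Finset.range k, b j := by
    rw [hS3 k hrk]; exact hsum
  have hdom' : ∀ i ≤ k, ∑ j ∈ Finset.range i, a' j ≤ ∑ j ∈ Finset.range i, b j := by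
    intro i hik
    rcases le_or_gt i p with h | h
    · rw [hS1 i h]; exact hdom i hik
    · rcases le_or_gt i r with h2 | h2
      · rw [hS2 i h h2]
        have := hAltB i h (by omega)
        omega
      · rw [hS3 i h2]; exact hdom i hik
  -- product strictly increases
  have hpmem : p ∈ Finset.range k := Finset.mem_range.mpr hpk
  have hrmem : r ∈ (Finset.range k).erase p :=
    Finset.mem_erase.mpr ⟨by omega, Finset.mem_range.mpr hrk⟩
  have hprodA : ∏ j ∈ Finset.range k, (a j + 1)
      = (a p + 1) * ((a r + 1) * ∏ j ∈ ((Finset.range k).erase p).erase r, (a j + 1)) := by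
    rw [← Finset.mul_prod_erase _ (fun j => a j + 1) hpmem,
      ← Finset.mul_prod_erase _ (fun j => a j + 1) hrmem]
  have hprodA' : ∏ j ∈ Finset.range k, (a' j + 1)
      = (a' p + 1) * ((a' r + 1) * ∏ j ∈ ((Finset.range k).erase p).erase r, (a j + 1)) := by
    rw [← Finset.mul_prod_erase _ (fun j => a' j + 1) hpmem,
      ← Finset.mul_prod_erase _ (fun j => a' j + 1) hrmem]
    congr 1
    congr 1
    exact Finset.prod_congr rfl (fun j hj => by
      rw [Finset.mem_erase, Finset.mem_erase] at hj
      rw [hvo j hj.2.1 hj.1])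
  have hXpos : 0 < ∏ j ∈ ((Finset.range k).erase p).erase r, (a j + 1) :=
    Finset.prod_pos (fun j _ => Nat.succ_pos _)
  have hlt : ∏ j ∈ Finset.range k, (a j + 1) < ∏ j ∈ Finset.range k, (a' j + 1) := by
    rw [hprodA, hprodA', hvp, hvr, (show a r - 1 + 1 = a r by omega)]
    have h1 : (a p + 1) * (a r + 1) < (a p + 1 + 1) * a r := by
      have e1 : (a p + 1) * (a r + 1) = (a p + 1) * a r + (a p + 1) := by ring
      have e2 : (a p + 1 + 1) * a r = (a p + 1) * a r + a r := by ring
      omega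
    calc (a p + 1) * ((a r + 1) * ∏ j ∈ ((Finset.range k).erase p).erase r, (a j + 1))
        = ((a p + 1) * (a r + 1)) * ∏ j ∈ ((Finset.range k).erase p).erase r, (a j + 1) := by
          ring
      _ < ((a p + 1 + 1) * a r) * ∏ j ∈ ((Finset.range k).erase p).erase r, (a j + 1) :=
          (Nat.mul_lt_mul_right hXpos).mpr h1
      _ = (a p + 1 + 1) * (a r * ∏ j ∈ ((Finset.range k).erase p).erase r, (a j + 1)) := by
          ring
  refine ⟨a', hsorted', hsum', hdom', hlt, ?_⟩
  apply Finset.sum_lt_sum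
  · intro i _
    have h : ∑ j ∈ Finset.range i, a j ≤ ∑ j ∈ Finset.range i, a' j := by
      rcases le_or_gt i p with h | h
      · rw [hS1 i h]
      · rcases le_or_gt i r with h2 | h2
        · rw [hS2 i h h2]; omega
        · rw [hS3 i h2]
    omega
  · refine ⟨p+1, Finset.mem_range.mpr (by omega), ?_⟩
    rw [hS2 (p+1) (by omega) (by omega)]
    have := hAltB (p+1) (by omega) (by omega)
    omega

private lemma sl2_key (k : ℕ) (b : ℕ → ℕ)
    (hb : ∀ i j, i ≤ j → j < k → b i ≤ b j) :
    ∀ M : ℕ, ∀ a : ℕ → ℕ,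
      (∀ i j, i ≤ j → j < k → a i ≤ a j) →
      (∑ j ∈ Finset.range k, a j = ∑ j ∈ Finset.range k, b j) →
      (∀ i ≤ k, ∑ j ∈ Finset.range i, a j ≤ ∑ j ∈ Finset.range i, b j) →
      (∑ i ∈ Finset.range (k+1), (∑ j ∈ Finset.range i, b j - ∑ j ∈ Finset.range i, a j) ≤ M) →
      (∏ j ∈ Finset.range k, (a j + 1) ≤ ∏ j ∈ Finset.range k, (b j + 1)) ∧
      ((∃ j, j < k ∧ a j ≠ b j) →
        ∏ j ∈ Finset.range k, (a j + 1) < ∏ j ∈ Finset.range k, (b j + 1)) := by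
  intro M
  induction M with
  | zero =>
    intro a ha hsum hdom hM
    by_cases hall : ∀ j, j < k → a j = b j
    · have heq : ∏ j ∈ Finset.range k, (a j + 1) = ∏ j ∈ Finset.range k, (b j + 1) :=
        Finset.prod_congr rfl (fun j hj => by rw [hall j (Finset.mem_range.mp hj)])
      exact ⟨heq.le, fun ⟨j, hj, hne⟩ => absurd (hall j hj) hne⟩
    · push_neg at hall
      obtain ⟨j0, hj0, hne0⟩ := hall
      obtain ⟨a', h1, h2, h3, h4, h5⟩ := sl2_step k a b ha hb hsum hdom ⟨j0, hj0, hne0⟩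
      omega
  | succ M ih =>
    intro a ha hsum hdom hM
    by_cases hall : ∀ j, j < k → a j = b j
    · have heq : ∏ j ∈ Finset.range k, (a j + 1) = ∏ j ∈ Finset.range k, (b j + 1) :=
        Finset.prod_congr rfl (fun j hj => by rw [hall j (Finset.mem_range.mp hj)])
      exact ⟨heq.le, fun ⟨j, hj, hne⟩ => absurd (hall j hj) hne⟩
    · push_neg at hall
      obtain ⟨j0, hj0, hne0⟩ := hall
      obtain ⟨a', h1, h2, h3, h4, h5⟩ := sl2_step k a b ha hb hsum hdom ⟨j0, hj0, hne0⟩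
      obtain ⟨ih1, _⟩ := ih a' h1 h2 h3 (by omega)
      exact ⟨(lt_of_lt_of_le h4 ih1).le, fun _ => lt_of_lt_of_le h4 ih1⟩

/-- The `sl₂` tensor product dimension inequality: `∏ (a j + 1) ≤ ∏ (b j + 1)` along
the dominance order, with equality iff the sequences coincide. -/
theorem stmt2 (k : ℕ) (a b : ℕ → ℕ)
    (ha : ∀ i j, i ≤ j → j < k → a i ≤ a j)
    (hb : ∀ i j, i ≤ j → j < k → b i ≤ b j)
    (hsum : ∑ j ∈ Finset.range k, a j = ∑ j ∈ Finset.range k, b j)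
    (hdom : ∀ i ≤ k, ∑ j ∈ Finset.range i, a j ≤ ∑ j ∈ Finset.range i, b j) :
    (∏ j ∈ Finset.range k, (a j + 1) ≤ ∏ j ∈ Finset.range k, (b j + 1)) ∧
      ((∏ j ∈ Finset.range k, (a j + 1) = ∏ j ∈ Finset.range k, (b j + 1)) ↔
        ∀ j < k, a j = b j) := by
  obtain ⟨h1, h2⟩ := sl2_key k b hb
    (∑ i ∈ Finset.range (k+1), (∑ j ∈ Finset.range i, b j - ∑ j ∈ Finset.range i, a j))
    a ha hsum hdom le_rfl
  refine ⟨h1, ⟨?_, ?_⟩⟩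
  · intro heq j hj
    by_contra hc
    exact absurd heq (Nat.ne_of_lt (h2 ⟨j, hj, hc⟩))
  · intro hall
    exact Finset.prod_congr rfl (fun j hj => by rw [hall j (Finset.mem_range.mp hj)])
end

section
/- Let $\mathfrak{g}$ be a finite-dimensional complex simple Lie algebra with Cartan subalgebra $\mathfrak{h}$, positive roots $R^+$, coroots $h_\alpha$, Weyl vector $\rho$. Let $\lambda \in P^+$, $k \ge 1$, and let $(\lambda_1, \dots, \lambda_k)$ and $(\mu_1, \dots, \mu_k)$ be $k$-tuples of dominant weights each summing to $\lambda$, such that for every $\alpha \in R^+$ and every $1 \le \ell \le k$, the minimum of $(\lambda_{i_1} + \cdots + \lambda_{i_\ell})(h_\alpha)$ over $\ell$-subsets is at most the corresponding minimum for the $\mu$'s. Then $\prod_{s=1}^k \dim V(\lambda_s) \le \prod_{s=1}^k \dim V(\mu_s)$, where $\dim V(\nu) = \prod_{\alpha \in R^+} \frac{(\nu+\rho)(h_\alpha)}{\rho(h_\alpha)}$ is the Weyl dimension. -/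
/-- `minSubsetSumZ f ℓ`: minimum of `∑_{i ∈ s} f i` over `ℓ`-element subsets `s`. -/
noncomputable def minSubsetSumZ {k : ℕ} (f : Fin k → ℤ) (ℓ : ℕ) : ℤ :=
  sInf {x | ∃ s : Finset (Fin k), s.card = ℓ ∧ ∑ i ∈ s, f i = x}


/-- prefix sum -/
def pre {k : ℕ} (f : Fin k → ℤ) (ℓ : ℕ) : ℤ :=
  ∑ i ∈ Finset.univ.filter (fun i : Fin k => (i : ℕ) < ℓ), f i

lemma pre_zero {k : ℕ} (f : Fin k → ℤ) : pre f 0 = 0 := by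
  simp [pre]

lemma pre_k {k : ℕ} (f : Fin k → ℤ) : pre f k = ∑ i, f i := by
  unfold pre
  congr 1
  ext i; simp [i.isLt]

lemma pre_succ {k : ℕ} (f : Fin k → ℤ) {ℓ : ℕ} (h : ℓ < k) :
    pre f (ℓ+1) = pre f ℓ + f ⟨ℓ, h⟩ := by
  unfold pre
  have : Finset.univ.filter (fun i : Fin k => (i : ℕ) < ℓ+1)
      = insert (⟨ℓ, h⟩ : Fin k) (Finset.univ.filter (fun i : Fin k => (i : ℕ) < ℓ)) := by
    ext i
    simp only [Finset.mem_filter, Finset.mem_insert, Finset.mem_univ, true_and, Fin.ext_iff]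
    omega
  rw [this, Finset.sum_insert (by simp)]
  ring

lemma filter_eq_map {k ℓ : ℕ} (h : ℓ ≤ k) :
    Finset.univ.filter (fun i : Fin k => (i : ℕ) < ℓ)
      = Finset.univ.map (Fin.castLEEmb h) := by
  ext i
  simp only [Finset.mem_filter, Finset.mem_univ, true_and, Finset.mem_map]
  constructor
  · intro hi
    refine ⟨⟨(i : ℕ), hi⟩, ?_⟩
    simp [Fin.castLEEmb, Fin.ext_iff]
  · rintro ⟨j, rfl⟩
    simp [Fin.castLEEmb]

lemma strictMono_le_val {ℓ k : ℕ} {g : Fin ℓ → Fin k} (hg : StrictMono g) :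
    ∀ n (hn : n < ℓ), n ≤ (g ⟨n, hn⟩ : ℕ) := by
  intro n
  induction n with
  | zero => intro _; exact Nat.zero_le _
  | succ m ih =>
    intro hn
    have hm : m < ℓ := (Nat.lt_succ_self m).trans hn
    have h1 := ih hm
    have h2 : g ⟨m, hm⟩ < g ⟨m+1, hn⟩ := hg (by simp [Fin.lt_def])
    have h3 : (g ⟨m, hm⟩ : ℕ) < (g ⟨m+1, hn⟩ : ℕ) := h2
    omega

lemma mss_nonempty {k : ℕ} (f : Fin k → ℤ) {ℓ : ℕ} (h : ℓ ≤ k) :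
    (pre f ℓ) ∈ {x | ∃ s : Finset (Fin k), s.card = ℓ ∧ ∑ i ∈ s, f i = x} := by
  refine ⟨Finset.univ.filter (fun i : Fin k => (i : ℕ) < ℓ), ?_, rfl⟩
  rw [filter_eq_map h]
  simp

lemma mss_bdd {k : ℕ} (f : Fin k → ℤ) (ℓ : ℕ) :
    BddBelow {x | ∃ s : Finset (Fin k), s.card = ℓ ∧ ∑ i ∈ s, f i = x} := by
  refine ⟨∑ i : Fin k, min (f i) 0, ?_⟩
  rintro x ⟨s, -, rfl⟩
  have h1 : ∑ i ∈ Finset.univ \ s, min (f i) 0 + ∑ i ∈ s, min (f i) 0 = ∑ i, min (f i) 0 :=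
    Finset.sum_sdiff (Finset.subset_univ s)
  have h2 : ∑ i ∈ Finset.univ \ s, min (f i) 0 ≤ 0 :=
    Finset.sum_nonpos (fun i _ => min_le_right _ _)
  have h3 : ∑ i ∈ s, min (f i) 0 ≤ ∑ i ∈ s, f i :=
    Finset.sum_le_sum (fun i _ => min_le_left _ _)
  omega

lemma mss_le_pre {k : ℕ} (f : Fin k → ℤ) {ℓ : ℕ} (h : ℓ ≤ k) :
    minSubsetSumZ f ℓ ≤ pre f ℓ :=
  csInf_le (mss_bdd f ℓ) (mss_nonempty f h)

lemma mss_of_monotone {k : ℕ} {f : Fin k → ℤ} (hf : Monotone f) {ℓ : ℕ} (h : ℓ ≤ k) :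
    minSubsetSumZ f ℓ = pre f ℓ := by
  refine le_antisymm (mss_le_pre f h) ?_
  apply le_csInf ⟨_, mss_nonempty f h⟩
  rintro x ⟨s, hcard, rfl⟩
  have hs : s = Finset.univ.map (s.orderEmbOfFin hcard).toEmbedding := by
    ext i
    simp only [Finset.mem_map, Finset.mem_univ, true_and]
    constructor
    · intro hi
      have : i ∈ Set.range (s.orderEmbOfFin hcard) := by
        rw [Finset.range_orderEmbOfFin]; exact hi
      obtain ⟨j, hj⟩ := this
      exact ⟨j, hj⟩
    · rintro ⟨j, rfl⟩
      exact Finset.orderEmbOfFin_mem s hcard j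
  rw [hs, Finset.sum_map]
  unfold pre
  rw [filter_eq_map h, Finset.sum_map]
  apply Finset.sum_le_sum
  intro j _
  apply hf
  show (Fin.castLEEmb h j : Fin k) ≤ s.orderEmbOfFin hcard j
  have := strictMono_le_val (s.orderEmbOfFin hcard).strictMono j j.isLt
  simp only [Fin.le_def]
  simpa [Fin.castLEEmb] using this

lemma mss_perm {k : ℕ} (f : Fin k → ℤ) (σ : Equiv.Perm (Fin k)) (ℓ : ℕ) :
    minSubsetSumZ (f ∘ σ) ℓ = minSubsetSumZ f ℓ := by
  unfold minSubsetSumZ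
  congr 1
  ext x
  simp only [Set.mem_setOf_eq]
  constructor
  · rintro ⟨s, hc, rfl⟩
    exact ⟨s.map σ.toEmbedding, by simp [hc], by rw [Finset.sum_map]; rfl⟩
  · rintro ⟨s, hc, rfl⟩
    refine ⟨s.map σ.symm.toEmbedding, by simp [hc], ?_⟩
    rw [Finset.sum_map]
    apply Finset.sum_congr rfl
    intro i _
    simp

lemma core {k : ℕ} (ρ : ℤ) (hρ : 0 < ρ) :
    ∀ (n : ℕ) (a b : Fin k → ℤ), (∀ s, 0 ≤ a s) → (∀ s, 0 ≤ b s) → Monotone b →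
    (∑ s, a s) = (∑ s, b s) →
    (∀ ℓ, ℓ ≤ k → minSubsetSumZ a ℓ ≤ pre b ℓ) →
    (∑ s, (a s)^2).toNat ≤ n →
    ∏ s, (a s + ρ) ≤ ∏ s, (b s + ρ) := by
  intro n
  induction n with
  | zero =>
    intro a b ha hb _ hsum _ hmeas
    have h0 : ∑ s, (a s)^2 = 0 := by
      have h1 : 0 ≤ ∑ s, (a s)^2 := Finset.sum_nonneg (fun s _ => sq_nonneg _)
      omega
    have ha0 : ∀ s, a s = 0 := by
      intro s
      have := (Finset.sum_eq_zero_iff_of_nonneg (fun i _ => sq_nonneg (a i))).1 h0 s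
        (Finset.mem_univ s)
      exact pow_eq_zero_iff (by norm_num) |>.1 this
    have hb0 : ∀ s, b s = 0 := by
      intro s
      have hs : ∑ s, b s = 0 := by
        rw [← hsum]; exact Finset.sum_eq_zero (fun i _ => ha0 i)
      exact (Finset.sum_eq_zero_iff_of_nonneg (fun i _ => hb i)).1 hs s (Finset.mem_univ s)
    apply le_of_eq
    exact Finset.prod_congr rfl (fun s _ => by rw [ha0 s, hb0 s])
  | succ n ih =>
    intro a b ha hb hbm hsum hmin hmeas
    set σ := Tuple.sort a with hσdef
    set a₀ : Fin k → ℤ := a ∘ σ with ha₀def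
    have ha₀m : Monotone a₀ := Tuple.monotone_sort a
    have ha₀nn : ∀ s, 0 ≤ a₀ s := fun s => ha _
    have hprodA : ∏ s, (a s + ρ) = ∏ s, (a₀ s + ρ) :=
      (Equiv.prod_comp σ (fun s => a s + ρ)).symm
    have hsumA : ∑ s, a₀ s = ∑ s, a s := Equiv.sum_comp σ a
    have hmeasA : ∑ s, (a₀ s)^2 = ∑ s, (a s)^2 := Equiv.sum_comp σ (fun s => (a s)^2)
    have hminA : ∀ ℓ, ℓ ≤ k → pre a₀ ℓ ≤ pre b ℓ := by
      intro ℓ hℓ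
      calc pre a₀ ℓ = minSubsetSumZ a₀ ℓ := (mss_of_monotone ha₀m hℓ).symm
        _ = minSubsetSumZ a ℓ := mss_perm a σ ℓ
        _ ≤ pre b ℓ := hmin ℓ hℓ
    clear_value σ a₀
    clear hσdef ha₀def hmin
    by_cases heq : a₀ = b
    · rw [hprodA, heq]
    have hex : ∃ i, a₀ i ≠ b i := Function.ne_iff.1 heq
    -- minimal bad index i
    set T : Finset (Fin k) := Finset.univ.filter (fun i => a₀ i ≠ b i) with hTdef
    have hT : T.Nonempty := by
      obtain ⟨i, hi⟩ := hex
      exact ⟨i, by simp [hTdef, hi]⟩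
    set i : Fin k := T.min' hT with hidef
    have hi : a₀ i ≠ b i := by
      have := T.min'_mem hT
      simpa [hTdef] using this
    have hlt : ∀ t : Fin k, t < i → a₀ t = b t := by
      intro t ht
      by_contra hc
      exact absurd (T.min'_le t (by simp [hTdef, hc])) (not_le.2 ht)
    clear_value i
    clear hidef hT hTdef
    have hpre_i : pre a₀ (i : ℕ) = pre b (i : ℕ) := by
      apply Finset.sum_congr rfl
      intro t hmem
      apply hlt
      rw [Fin.lt_def]
      simpa using hmem
    have hib : a₀ i + 1 ≤ b i := by
      have h1 := hminA ((i : ℕ) + 1) i.isLt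
      rw [pre_succ a₀ i.isLt, pre_succ b i.isLt] at h1
      simp only [Fin.eta] at h1
      omega
    have hik : (i : ℕ) + 1 < k := by
      have h1 : pre b ((i : ℕ) + 1) - pre a₀ ((i : ℕ) + 1) = b i - a₀ i := by
        rw [pre_succ a₀ i.isLt, pre_succ b i.isLt]
        simp only [Fin.eta]
        omega
      have h2 : pre b k - pre a₀ k = 0 := by
        rw [pre_k, pre_k, hsumA, hsum]; ring
      have h3 : (i : ℕ) + 1 ≤ k := i.isLt
      rcases eq_or_lt_of_le h3 with h4 | h4
      · exfalso; rw [h4] at h1; omega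
      · exact h4
    -- find the compensating index j
    have hkpos : 0 < k := by omega
    have hQ : ∃ m, (i : ℕ) < m ∧ m < k ∧ pre b (m+1) - pre a₀ (m+1) ≤ 0 := by
      refine ⟨k - 1, by omega, by omega, ?_⟩
      have : k - 1 + 1 = k := by omega
      rw [this, pre_k, pre_k, hsumA, hsum]
      omega
    set j : ℕ := Nat.find hQ with hjdef
    obtain ⟨hij, hjk, hDj1⟩ := Nat.find_spec hQ
    rw [← hjdef] at hij hjk hDj1
    have hDj1' : pre b (j+1) - pre a₀ (j+1) = 0 := by
      have := hminA (j+1) hjk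
      omega
    have hdpos : ∀ m, (i : ℕ) < m → m ≤ j → 1 ≤ pre b m - pre a₀ m := by
      intro m h1 h2
      rcases Nat.lt_or_ge (i : ℕ) (m - 1) with h3 | h3
      · -- m - 1 > i, use minimality of j
        have h5 : m - 1 < j := by omega
        have h6 := Nat.find_min hQ h5
        push_neg at h6
        have h7 := h6 h3 (by omega)
        have h8 : m - 1 + 1 = m := by omega
        rw [h8] at h7
        omega
      · -- m = i + 1
        have h4 : m = (i : ℕ) + 1 := by omega
        subst h4
        rw [pre_succ a₀ i.isLt, pre_succ b i.isLt]
        simp only [Fin.eta]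
        omega
    clear_value j
    set jF : Fin k := ⟨j, hjk⟩ with hjFdef
    have hbj : b jF ≤ a₀ jF - 1 := by
      have h1 : pre b (j+1) = pre b j + b jF := pre_succ b hjk
      have h2 : pre a₀ (j+1) = pre a₀ j + a₀ jF := pre_succ a₀ hjk
      have h3 := hdpos j hij le_rfl
      omega
    have hiltj : i < jF := by rw [Fin.lt_def]; exact hij
    have haij : a₀ i + 2 ≤ a₀ jF := by
      have h1 : b i ≤ b jF := hbm hiltj.le
      omega
    have hne : i ≠ jF := ne_of_lt hiltj
    clear_value jF
    set a' : Fin k → ℤ :=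
      fun s => if s = i then a₀ i + 1 else if s = jF then a₀ jF - 1 else a₀ s with ha'def
    have ha'i : a' i = a₀ i + 1 := by simp [ha'def]
    have ha'j : a' jF = a₀ jF - 1 := by simp [ha'def, hne.symm]
    have ha'other : ∀ s, s ≠ i → s ≠ jF → a' s = a₀ s := by
      intro s h1 h2; simp [ha'def, h1, h2]
    clear_value a'
    clear ha'def
    have hjmem : jF ∈ Finset.univ.erase i := by simp [Finset.mem_erase, hne.symm]
    have ssplit : ∀ g : Fin k → ℤ,
        ∑ s, g s = g i + (g jF + ∑ s ∈ (Finset.univ.erase i).erase jF, g s) := by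
      intro g
      rw [← Finset.add_sum_erase _ g (Finset.mem_univ i), ← Finset.add_sum_erase _ g hjmem]
    have psplit : ∀ g : Fin k → ℤ,
        ∏ s, g s = g i * (g jF * ∏ s ∈ (Finset.univ.erase i).erase jF, g s) := by
      intro g
      rw [← Finset.mul_prod_erase _ g (Finset.mem_univ i), ← Finset.mul_prod_erase _ g hjmem]
    have hrest : ∀ (g g' : Fin k → ℤ), (∀ s, s ≠ i → s ≠ jF → g s = g' s) →
        ∑ s ∈ (Finset.univ.erase i).erase jF, g s
          = ∑ s ∈ (Finset.univ.erase i).erase jF, g' s := by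
      intro g g' hg
      apply Finset.sum_congr rfl
      intro s hs
      simp only [Finset.mem_erase] at hs
      exact hg s hs.2.1 hs.1
    have hrestS := hrest a' a₀ ha'other
    -- a' properties
    have ha'nn : ∀ s, 0 ≤ a' s := by
      intro s
      by_cases h1 : s = i
      · rw [h1, ha'i]; have := ha₀nn i; omega
      by_cases h2 : s = jF
      · rw [h2, ha'j]; have := hb jF; omega
      · rw [ha'other s h1 h2]; exact ha₀nn s
    have hsum' : ∑ s, a' s = ∑ s, b s := by
      have e1 := ssplit a'
      have e2 := ssplit a₀
      rw [ha'i, ha'j, hrestS] at e1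
      omega
    have hmeas' : ∑ s, (a' s)^2 + 2 ≤ ∑ s, (a₀ s)^2 := by
      have e1 := ssplit (fun s => (a' s)^2)
      have e2 := ssplit (fun s => (a₀ s)^2)
      simp only [ha'i, ha'j] at e1 e2
      have hR : ∑ s ∈ (Finset.univ.erase i).erase jF, (a' s)^2
          = ∑ s ∈ (Finset.univ.erase i).erase jF, (a₀ s)^2 := by
        apply Finset.sum_congr rfl
        intro s hs
        simp only [Finset.mem_erase] at hs
        rw [ha'other s hs.2.1 hs.1]
      rw [hR] at e1
      have hr : (a₀ i + 1)^2 + ((a₀ jF - 1)^2) - ((a₀ i)^2 + (a₀ jF)^2)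
          = 2*(a₀ i - a₀ jF) + 2 := by ring
      linarith only [hr, haij, e1, e2]
    -- prefix sums of a'
    have hpre' : ∀ ℓ, ℓ ≤ k → pre a' ℓ ≤ pre b ℓ := by
      intro ℓ hℓ
      have key : pre a' ℓ = pre a₀ ℓ + ((if i ∈ Finset.univ.filter (fun t : Fin k => (t : ℕ) < ℓ) then (1:ℤ) else 0)
          + (if jF ∈ Finset.univ.filter (fun t : Fin k => (t : ℕ) < ℓ) then (-1:ℤ) else 0)) := by
        unfold pre
        have step : ∑ s ∈ Finset.univ.filter (fun t : Fin k => (t : ℕ) < ℓ), a' s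
            = ∑ s ∈ Finset.univ.filter (fun t : Fin k => (t : ℕ) < ℓ),
                (a₀ s + ((if s = i then (1:ℤ) else 0) + (if s = jF then (-1:ℤ) else 0))) := by
          apply Finset.sum_congr rfl
          intro s _
          by_cases h1 : s = i
          · subst h1; rw [ha'i, if_pos rfl, if_neg hne]; ring
          by_cases h2 : s = jF
          · subst h2; rw [ha'j, if_neg h1, if_pos rfl]; ring
          · rw [ha'other s h1 h2, if_neg h1, if_neg h2]; ring
        rw [step, Finset.sum_add_distrib, Finset.sum_add_distrib,
          Finset.sum_ite_eq' (Finset.univ.filter (fun t : Fin k => (t : ℕ) < ℓ)) i (fun _ => (1:ℤ)),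
          Finset.sum_ite_eq' (Finset.univ.filter (fun t : Fin k => (t : ℕ) < ℓ)) jF (fun _ => (-1:ℤ))]
      have hmemi : i ∈ Finset.univ.filter (fun t : Fin k => (t : ℕ) < ℓ) ↔ (i : ℕ) < ℓ := by simp
      have hmemj : jF ∈ Finset.univ.filter (fun t : Fin k => (t : ℕ) < ℓ) ↔ j < ℓ := by simp [hjFdef]
      by_cases hc1 : (i : ℕ) < ℓ
      · by_cases hc2 : j < ℓ
        · rw [key, if_pos (hmemi.2 hc1), if_pos (hmemj.2 hc2)]
          have := hminA ℓ hℓ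
          omega
        · rw [key, if_pos (hmemi.2 hc1), if_neg (fun h => hc2 (hmemj.1 h))]
          have := hdpos ℓ hc1 (by omega)
          omega
      · have hc2 : ¬ j < ℓ := by omega
        rw [key, if_neg (fun h => hc1 (hmemi.1 h)), if_neg (fun h => hc2 (hmemj.1 h))]
        have := hminA ℓ hℓ
        omega
    -- measure bound for recursion
    have hmeas'' : (∑ s, (a' s)^2).toNat ≤ n := by
      have q1 : 0 ≤ ∑ s, (a' s)^2 := Finset.sum_nonneg (fun s _ => sq_nonneg _)
      have q2 : 0 ≤ ∑ s, (a s)^2 := Finset.sum_nonneg (fun s _ => sq_nonneg _)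
      omega
    -- the product increases under the transfer
    have hprod1 : ∏ s, (a₀ s + ρ) ≤ ∏ s, (a' s + ρ) := by
      have e1 := psplit (fun s => a' s + ρ)
      have e2 := psplit (fun s => a₀ s + ρ)
      simp only [ha'i, ha'j] at e1 e2
      have hR : ∏ s ∈ (Finset.univ.erase i).erase jF, (a' s + ρ)
          = ∏ s ∈ (Finset.univ.erase i).erase jF, (a₀ s + ρ) := by
        apply Finset.prod_congr rfl
        intro s hs
        simp only [Finset.mem_erase] at hs
        rw [ha'other s hs.2.1 hs.1]
      rw [hR] at e1
      rw [e1, e2]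
      have hRnn : 0 ≤ ∏ s ∈ (Finset.univ.erase i).erase jF, (a₀ s + ρ) :=
        Finset.prod_nonneg (fun s _ => by have := ha₀nn s; omega)
      have hkey : (a₀ i + ρ) * (a₀ jF + ρ) ≤ (a₀ i + 1 + ρ) * (a₀ jF - 1 + ρ) := by
        have hr : (a₀ i + 1 + ρ) * (a₀ jF - 1 + ρ) - (a₀ i + ρ) * (a₀ jF + ρ)
            = a₀ jF - a₀ i - 1 := by ring
        linarith only [hr, haij]
      have hm := mul_le_mul_of_nonneg_right hkey hRnn
      have g1 : (a₀ i + ρ) * ((a₀ jF + ρ) * ∏ s ∈ (Finset.univ.erase i).erase jF, (a₀ s + ρ))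
          = (a₀ i + ρ) * (a₀ jF + ρ) * ∏ s ∈ (Finset.univ.erase i).erase jF, (a₀ s + ρ) := by ring
      have g2 : (a₀ i + 1 + ρ) * ((a₀ jF - 1 + ρ) * ∏ s ∈ (Finset.univ.erase i).erase jF, (a₀ s + ρ))
          = (a₀ i + 1 + ρ) * (a₀ jF - 1 + ρ) * ∏ s ∈ (Finset.univ.erase i).erase jF, (a₀ s + ρ) := by ring
      linarith only [hm, g1, g2]
    -- recursive step
    have hrec : ∏ s, (a' s + ρ) ≤ ∏ s, (b s + ρ) := by
      apply ih a' b ha'nn hb hbm hsum'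
      · intro ℓ hℓ
        exact le_trans (mss_le_pre a' hℓ) (hpre' ℓ hℓ)
      · exact hmeas''
    calc ∏ s, (a s + ρ) = ∏ s, (a₀ s + ρ) := hprodA
      _ ≤ ∏ s, (a' s + ρ) := hprod1
      _ ≤ ∏ s, (b s + ρ) := hrec

lemma core' {k : ℕ} (ρ : ℤ) (hρ : 0 < ρ) (a b : Fin k → ℤ)
    (ha : ∀ s, 0 ≤ a s) (hb : ∀ s, 0 ≤ b s)
    (hsum : ∑ s, a s = ∑ s, b s)
    (hmin : ∀ ℓ, 1 ≤ ℓ → ℓ ≤ k → minSubsetSumZ a ℓ ≤ minSubsetSumZ b ℓ) :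
    ∏ s, (a s + ρ) ≤ ∏ s, (b s + ρ) := by
  set τ := Tuple.sort b with hτ
  set b₀ : Fin k → ℤ := b ∘ τ with hb₀
  have hb₀m : Monotone b₀ := Tuple.monotone_sort b
  have hb₀nn : ∀ s, 0 ≤ b₀ s := fun s => hb _
  have hsumB : ∑ s, b₀ s = ∑ s, b s := Equiv.sum_comp τ b
  have hprodB : ∏ s, (b₀ s + ρ) = ∏ s, (b s + ρ) := Equiv.prod_comp τ (fun s => b s + ρ)
  have hmin' : ∀ ℓ, ℓ ≤ k → minSubsetSumZ a ℓ ≤ pre b₀ ℓ := by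
    intro ℓ hℓ
    rcases Nat.eq_zero_or_pos ℓ with h0 | h1
    · subst h0
      calc minSubsetSumZ a 0 ≤ pre a 0 := mss_le_pre a (Nat.zero_le k)
        _ = 0 := pre_zero a
        _ = pre b₀ 0 := (pre_zero b₀).symm
    · calc minSubsetSumZ a ℓ ≤ minSubsetSumZ b ℓ := hmin ℓ h1 hℓ
        _ = minSubsetSumZ b₀ ℓ := (mss_perm b τ ℓ).symm
        _ = pre b₀ ℓ := mss_of_monotone hb₀m hℓ
  rw [← hprodB]
  exact core ρ hρ (∑ s, (a s)^2).toNat a b₀ ha hb₀nn hb₀m (hsum.trans hsumB.symm) hmin' le_rfl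


/-- Theorem 1 (i): dimensions of tensor products increase along the preorder.
Weights are encoded by their (nonnegative) values on the coroots `h_α`, `α ∈ R⁺`
(`R` is the finite set of positive roots); `ρ` is the Weyl vector, with
`ρ(h_α) > 0`, and `dim V(ν) = ∏_{α} (ν+ρ)(h_α)/ρ(h_α)` is the Weyl dimension. -/
theorem stmt12 (R : Type*) [Fintype R] (k : ℕ) (hk : 1 ≤ k)
    (ρ : R → ℤ) (hρ : ∀ α, 0 < ρ α)
    (lam mu : Fin k → R → ℤ)
    (hld : ∀ s α, 0 ≤ lam s α) (hmd : ∀ s α, 0 ≤ mu s α)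
    (hsum : ∀ α, ∑ s, lam s α = ∑ s, mu s α)
    (hpre : ∀ α, ∀ ℓ, 1 ≤ ℓ → ℓ ≤ k →
      minSubsetSumZ (fun s => lam s α) ℓ ≤ minSubsetSumZ (fun s => mu s α) ℓ) :
    ∏ s, ∏ α, (((lam s α : ℚ) + (ρ α : ℚ)) / (ρ α : ℚ)) ≤
      ∏ s, ∏ α, (((mu s α : ℚ) + (ρ α : ℚ)) / (ρ α : ℚ)) := by

  have e1 : ∏ s, ∏ α, (((lam s α : ℚ) + (ρ α : ℚ)) / (ρ α : ℚ))
      = ∏ α, ∏ s, (((lam s α : ℚ) + (ρ α : ℚ)) / (ρ α : ℚ)) := Finset.prod_comm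
  have e2 : ∏ s, ∏ α, (((mu s α : ℚ) + (ρ α : ℚ)) / (ρ α : ℚ))
      = ∏ α, ∏ s, (((mu s α : ℚ) + (ρ α : ℚ)) / (ρ α : ℚ)) := Finset.prod_comm
  rw [e1, e2]
  apply Finset.prod_le_prod
  · intro α _
    apply Finset.prod_nonneg
    intro s _
    have h1 := hld s α
    have h2 := hρ α
    apply div_nonneg
    · push_cast; exact_mod_cast (by omega : (0:ℤ) ≤ lam s α + ρ α)
    · exact_mod_cast h2.le
  · intro α _
    have key : ∏ s, (lam s α + ρ α) ≤ ∏ s, (mu s α + ρ α) :=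
      core' (ρ α) (hρ α) (fun s => lam s α) (fun s => mu s α)
        (fun s => hld s α) (fun s => hmd s α) (hsum α) (hpre α)
    rw [Finset.prod_div_distrib, Finset.prod_div_distrib]
    have hpos : (0:ℚ) < ∏ _s : Fin k, (ρ α : ℚ) :=
      Finset.prod_pos (fun s _ => by exact_mod_cast hρ α)
    rw [div_le_div_iff₀ hpos hpos]
    have hnum : (∏ s, ((lam s α : ℚ) + (ρ α : ℚ))) ≤ ∏ s, ((mu s α : ℚ) + (ρ α : ℚ)) := by
      exact_mod_cast key
    have hnn : (0:ℚ) ≤ ∏ s, ((lam s α : ℚ) + (ρ α : ℚ)) := by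
      apply Finset.prod_nonneg
      intro s _
      have h1 := hld s α
      have h2 := hρ α
      exact_mod_cast (by omega : (0:ℤ) ≤ lam s α + ρ α)
    exact mul_le_mul_of_nonneg_right hnum hpos.le
end

section
/- Let $\mathfrak{g}$ be simple with Weyl group $W$. Let $(\lambda_1, \lambda_2), (\mu_1, \mu_2)$ be pairs of dominant weights with $\lambda_1 + \lambda_2 = \mu_1 + \mu_2$, and let $w \in W$ be such that $w(\lambda_1 - \lambda_2)$ is dominant. Then $(\lambda_1,\lambda_2) \preceq (\mu_1,\mu_2)$ if and only if both $w(\lambda_1 - \mu_1)$ and $w(\mu_1 - \lambda_2)$ are dominant. -/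
/-!
The preorder condition `(λ₁ - μ₁)(h_α) (μ₁ - λ₂)(h_α) ≥ 0` says that `μ₁(h_α)` lies between
`λ₁(h_α)` and `λ₂(h_α)`. This is invariant under `α ↦ -α`, so it holds at the positive roots
iff it holds at all roots, iff it holds at all `w⁻¹α` with `α` positive. For those roots
`λ₂(h_{w⁻¹α}) ≤ λ₁(h_{w⁻¹α})` by the choice of `w`, so "between" becomes the two dominance
conditions.
-/

open Set

theorem min_le_min_iff_mem_uIcc {G : Type*} [AddCommGroup G] [LinearOrder G]
    [IsOrderedAddMonoid G] {a b c d : G} (h : a + b = c + d) :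
    min a b ≤ min c d ↔ c ∈ uIcc a b := by
  rw [mem_uIcc, le_min_iff, min_le_iff, min_le_iff]
  grind

theorem neg_mem_uIcc_neg_iff {G : Type*} [AddCommGroup G] [LinearOrder G]
    [IsOrderedAddMonoid G] {a b c : G} : -c ∈ uIcc (-a) (-b) ↔ c ∈ uIcc a b := by
  rw [← neg_uIcc, mem_neg, neg_neg]

section PositiveRoots

variable {R : Type*} {neg : R → R} {pos : R → Prop}

theorem forall_pos_iff_forall (hposneg : ∀ α, pos α ∨ pos (neg α)) {P : R → Prop}
    (hP : ∀ α, P (neg α) → P α) : (∀ α, pos α → P α) ↔ ∀ α, P α :=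
  ⟨fun h α => (hposneg α).elim (h α) (fun hα => hP α (h _ hα)), fun h α _ => h α⟩

theorem forall_pos_perm_iff_forall (hposneg : ∀ α, pos α ∨ pos (neg α)) {w : Equiv.Perm R}
    (hwneg : ∀ α, w (neg α) = neg (w α)) {P : R → Prop} (hP : ∀ α, P (neg α) → P α) :
    (∀ α, pos α → P (w.symm α)) ↔ ∀ α, P α := by
  have hwneg' : ∀ α, w.symm (neg α) = neg (w.symm α) := fun α => by
    rw [Equiv.symm_apply_eq, hwneg, Equiv.apply_symm_apply]
  rw [forall_pos_iff_forall hposneg (P := fun α => P (w.symm α)) fun α => by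
    simpa only [hwneg'] using hP (w.symm α)]
  exact w.forall_congr_left.symm

end PositiveRoots

/- A weight `ν` is encoded as `α ↦ ν(h_α)` on the roots `R`, with `neg α = -α`; then `w • ν`
is `α ↦ ν(h_{w⁻¹α})`. -/
theorem stmt15_general {R : Type*} (neg : R → R) (pos : R → Prop)
    (hposneg : ∀ α, pos α ∨ pos (neg α))
    (w : Equiv.Perm R) (hwneg : ∀ α, w (neg α) = neg (w α))
    (l1 l2 m1 m2 : R → ℤ)
    (hodd1 : ∀ α, l1 (neg α) = - l1 α) (hodd2 : ∀ α, l2 (neg α) = - l2 α)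
    (hodd3 : ∀ α, m1 (neg α) = - m1 α)
    (hsum : ∀ α, l1 α + l2 α = m1 α + m2 α)
    (hw : ∀ α, pos α → 0 ≤ l1 (w.symm α) - l2 (w.symm α)) :
    (∀ α, pos α → min (l1 α) (l2 α) ≤ min (m1 α) (m2 α)) ↔
      ((∀ α, pos α → 0 ≤ l1 (w.symm α) - m1 (w.symm α)) ∧
        (∀ α, pos α → 0 ≤ m1 (w.symm α) - l2 (w.symm α))) := by
  set P : R → Prop := fun α => m1 α ∈ uIcc (l1 α) (l2 α)
  have hP : ∀ α, P (neg α) → P α := fun α h => by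
    simpa only [P, hodd1, hodd2, hodd3, neg_mem_uIcc_neg_iff] using h
  calc (∀ α, pos α → min (l1 α) (l2 α) ≤ min (m1 α) (m2 α))
      ↔ ∀ α, pos α → P α := forall₂_congr fun α _ => min_le_min_iff_mem_uIcc (hsum α)
    _ ↔ ∀ α, P α := forall_pos_iff_forall hposneg hP
    _ ↔ ∀ α, pos α → P (w.symm α) := (forall_pos_perm_iff_forall hposneg hwneg hP).symm
    _ ↔ ∀ α, pos α → m1 (w.symm α) ≤ l1 (w.symm α) ∧ l2 (w.symm α) ≤ m1 (w.symm α) :=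
        forall₂_congr fun α hα => by
          show m1 _ ∈ _ ↔ _
          rw [uIcc_of_ge (sub_nonneg.mp (hw α hα)), mem_Icc, and_comm]
    _ ↔ _ := by simp only [sub_nonneg, imp_and, forall_and]

/-- Proposition 5.1, second statement.  Roots form a type `R` with negation `neg`
and a positivity predicate `pos` such that every root is positive or has positive
negative; weights are encoded by their values on the coroots `h_α` (`α ∈ R`), so
they are odd with respect to `neg`.  A Weyl group element is a permutation `w` of
`R` commuting with `neg`; it acts on a weight `ν` by `(w•ν)(h_α) = ν(h_{w⁻¹α})`,
and `w•ν` is dominant iff `ν(h_{w⁻¹α}) ≥ 0` for all positive `α`.  If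
`w(λ₁ - λ₂)` is dominant, then `(λ₁,λ₂) ⪯ (μ₁,μ₂)` iff both `w(λ₁ - μ₁)` and
`w(μ₁ - λ₂)` are dominant. -/
theorem stmt15 {R : Type*} (neg : R → R) (pos : R → Prop)
    (hposneg : ∀ α, pos α ∨ pos (neg α))
    (w : Equiv.Perm R) (hwneg : ∀ α, w (neg α) = neg (w α))
    (l1 l2 m1 m2 : R → ℤ)
    (hodd1 : ∀ α, l1 (neg α) = - l1 α) (hodd2 : ∀ α, l2 (neg α) = - l2 α)
    (hodd3 : ∀ α, m1 (neg α) = - m1 α) (hodd4 : ∀ α, m2 (neg α) = - m2 α)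
    (hd1 : ∀ α, pos α → 0 ≤ l1 α) (hd2 : ∀ α, pos α → 0 ≤ l2 α)
    (hd3 : ∀ α, pos α → 0 ≤ m1 α) (hd4 : ∀ α, pos α → 0 ≤ m2 α)
    (hsum : ∀ α, l1 α + l2 α = m1 α + m2 α)
    (hw : ∀ α, pos α → 0 ≤ l1 (w.symm α) - l2 (w.symm α)) :
    (∀ α, pos α → min (l1 α) (l2 α) ≤ min (m1 α) (m2 α)) ↔
      ((∀ α, pos α → 0 ≤ l1 (w.symm α) - m1 (w.symm α)) ∧
        (∀ α, pos α → 0 ≤ m1 (w.symm α) - l2 (w.symm α))) :=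
  stmt15_general neg pos hposneg w hwneg l1 l2 m1 m2 hodd1 hodd2 hodd3 hsum hw
end

section
/- Let $\mathfrak{g}$ be simple, and let $(\lambda_1, \lambda_2)$, $(\mu_1, \mu_2)$ be pairs of dominant weights with the same sum $\lambda$. If $\min\{\lambda_1(h_\alpha), \lambda_2(h_\alpha)\} = \min\{\mu_1(h_\alpha), \mu_2(h_\alpha)\}$ for all $\alpha \in R^+$, then $(\mu_1, \mu_2) = (\lambda_1, \lambda_2)$ or $(\mu_1, \mu_2) = (\lambda_2, \lambda_1)$. -/
/-- Lemma 6.5 (equivalence classes in `P⁺(λ,2)` are `S₂`-orbits).  The Dynkin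
diagram of the simple Lie algebra is a connected graph `G` on the set `I` of
simple roots; a weight is encoded by its values on the simple coroots, and a
positive coroot is a nonnegative combination `c : I → ℤ` of simple coroots, a
weight `ν` taking value `∑ i, c i * ν i` on it.  The set `C` of positive coroots
contains each simple coroot, and the sum of the simple coroots over any connected
subset of the diagram (a coroot of the dual root system).  If two pairs of
dominant weights with the same sum satisfy
`min(λ₁(h_α),λ₂(h_α)) = min(μ₁(h_α),μ₂(h_α))` for every positive coroot, then the
pairs agree up to swapping. -/
theorem stmt17 {I : Type*} [Fintype I] [DecidableEq I]
    (G : SimpleGraph I) (hG : G.Connected)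
    (C : Set (I → ℤ))
    (hsimp : ∀ i : I, (fun j => if j = i then (1 : ℤ) else 0) ∈ C)
    (hconn : ∀ I0 : Finset I, I0.Nonempty → (G.induce (I0 : Set I)).Connected →
      (fun j => if j ∈ I0 then (1 : ℤ) else 0) ∈ C)
    (l1 l2 m1 m2 : I → ℤ)
    (hd1 : ∀ c ∈ C, 0 ≤ ∑ i, c i * l1 i) (hd2 : ∀ c ∈ C, 0 ≤ ∑ i, c i * l2 i)
    (hd3 : ∀ c ∈ C, 0 ≤ ∑ i, c i * m1 i) (hd4 : ∀ c ∈ C, 0 ≤ ∑ i, c i * m2 i)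
    (hsum : ∀ i, l1 i + l2 i = m1 i + m2 i)
    (heq : ∀ c ∈ C, min (∑ i, c i * l1 i) (∑ i, c i * l2 i) =
      min (∑ i, c i * m1 i) (∑ i, c i * m2 i)) :
    (m1 = l1 ∧ m2 = l2) ∨ (m1 = l2 ∧ m2 = l1) := by
  -- pointwise dichotomy
  have hpt : ∀ i, m1 i = l1 i ∨ m1 i = l2 i := by
    intro i
    have h := heq _ (hsimp i)
    simp only [ite_mul, one_mul, zero_mul, Finset.sum_ite_eq', Finset.mem_univ, if_true] at h
    have := hsum i
    omega
  -- key claim via strong induction on walk length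
  have key : ∀ n : ℕ, ∀ a b : I, ∀ w : G.Walk a b, w.length ≤ n →
      m1 a = l2 a → m1 a ≠ l1 a → m1 b = l1 b → m1 b ≠ l2 b → False := by
    intro n
    induction n with
    | zero =>
      intro a b w hw h1 h2 h3 h4
      have hab : a = b := w.eq_of_length_eq_zero (Nat.le_zero.mp hw)
      subst hab
      exact h2 h3
    | succ n ih =>
      intro a b w hw h1 h2 h3 h4
      have hab : a ≠ b := fun h => by subst h; exact h4 h1
      by_cases hv : ∃ v ∈ w.support, v ≠ a ∧ v ≠ b ∧ l1 v ≠ l2 v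
      · obtain ⟨v, hvs, hva, hvb, hvd⟩ := hv
        have hlen := congrArg SimpleGraph.Walk.length (w.take_spec hvs)
        rw [SimpleGraph.Walk.length_append] at hlen
        rcases hpt v with h | h
        · -- m1 v = l1 v, and l1 v ≠ l2 v : v plays the role of b
          have hne : m1 v ≠ l2 v := fun hc => hvd (h ▸ hc)
          have ht0 : (w.dropUntil v hvs).length ≠ 0 := fun h0 =>
            hvb ((w.dropUntil v hvs).eq_of_length_eq_zero h0)
          exact ih a v (w.takeUntil v hvs) (by omega) h1 h2 h hne
        · -- m1 v = l2 v, and l1 v ≠ l2 v : v plays the role of a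
          have hne : m1 v ≠ l1 v := fun hc => hvd (hc.symm.trans h)
          have ht0 : (w.takeUntil v hvs).length ≠ 0 := fun h0 =>
            hva ((w.takeUntil v hvs).eq_of_length_eq_zero h0).symm
          exact ih v b (w.dropUntil v hvs) (by omega) h hne h3 h4
      · push_neg at hv
        set I0 : Finset I := w.support.toFinset with hI0
        have haI : a ∈ I0 := by simp [hI0, w.start_mem_support]
        have hbI : b ∈ I0 := by simp [hI0, w.end_mem_support]
        have hco : (G.induce (I0 : Set I)).Connected := by
          have : (I0 : Set I) = {v | v ∈ w.support} := by
            simp [hI0, List.coe_toFinset]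
          rw [this]
          exact w.connected_induce_support
        have hC := hconn I0 ⟨a, haI⟩ hco
        have heqI := heq _ hC
        have hs : ∀ f : I → ℤ,
            ∑ j, (if j ∈ I0 then (1 : ℤ) else 0) * f j = ∑ j ∈ I0, f j := by
          intro f; simp
        rw [hs l1, hs l2, hs m1, hs m2] at heqI
        have hsub : ({a, b} : Finset I) ⊆ I0 := by
          intro x hx
          rcases Finset.mem_insert.mp hx with h | h
          · exact h ▸ haI
          · exact (Finset.mem_singleton.mp h) ▸ hbI
        -- every other vertex of the support has all four values equal
        have hzero : ∀ x ∈ I0, x ∉ ({a, b} : Finset I) → l1 x = l2 x ∧ m1 x = l1 x := by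
          intro x hx hnx
          simp only [Finset.mem_insert, Finset.mem_singleton, not_or] at hnx
          have hx' : x ∈ w.support := by simpa [hI0] using hx
          have h12 : l1 x = l2 x := by
            by_contra hc
            exact hc (hv x hx' hnx.1 hnx.2)
          refine ⟨h12, ?_⟩
          rcases hpt x with h | h
          · exact h
          · rw [h, h12]
        have e1 : ∑ i ∈ I0, l1 i - ∑ i ∈ I0, l2 i = (l1 a - l2 a) + (l1 b - l2 b) := by
          rw [← Finset.sum_sub_distrib]
          rw [← Finset.sum_subset hsub (fun x hx hnx => sub_eq_zero.mpr (hzero x hx hnx).1)]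
          rw [Finset.sum_pair hab]
        have e2 : ∑ i ∈ I0, l1 i - ∑ i ∈ I0, m1 i = l1 a - l2 a := by
          rw [← Finset.sum_sub_distrib]
          rw [← Finset.sum_subset hsub (fun x hx hnx =>
            sub_eq_zero.mpr ((hzero x hx hnx).2).symm)]
          rw [Finset.sum_pair hab, h1, h3]
          ring
        have e3 : ∑ i ∈ I0, m1 i + ∑ i ∈ I0, m2 i = ∑ i ∈ I0, l1 i + ∑ i ∈ I0, l2 i := by
          rw [← Finset.sum_add_distrib, ← Finset.sum_add_distrib]
          exact (Finset.sum_congr rfl (fun i _ => (hsum i).symm))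
        have pa : l1 a - l2 a ≠ 0 := fun hc => h2 (by omega)
        have pb : l1 b - l2 b ≠ 0 := fun hc => h4 (by omega)
        omega
  by_cases hm : ∀ i, m1 i = l1 i
  · left
    refine ⟨funext hm, funext fun i => ?_⟩
    have := hsum i; have := hm i; omega
  · push_neg at hm
    obtain ⟨a, ha⟩ := hm
    have ha2 : m1 a = l2 a := (hpt a).resolve_left ha
    by_cases hm2 : ∀ i, m1 i = l2 i
    · right
      refine ⟨funext hm2, funext fun i => ?_⟩
      have := hsum i; have := hm2 i; omega
    · push_neg at hm2
      obtain ⟨b, hb⟩ := hm2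
      have hb1 : m1 b = l1 b := (hpt b).resolve_right hb
      obtain ⟨w⟩ := hG.preconnected a b
      exact (key w.length a b w le_rfl ha2 ha hb1 hb).elim
end

section
/- In type $A_n$, write $\lambda = \sum_{i=1}^n r_i \omega_i \in P^+$. Define $\lambda^1$ as follows: if all $r_i$ are even, $\lambda^1 = \lambda^2 = \lambda/2$; otherwise, listing the indices $i_0 < i_1 < \cdots < i_p$ where $r_i$ is odd, set $\lambda^1 = \sum_{s=0}^p \frac{r_{i_s} + (-1)^s}{2}\omega_{i_s} + \sum_{i : r_i \text{ even}} \frac{r_i}{2}\omega_i$ and $\lambda^2 = \lambda - \lambda^1$. Then $(\lambda^1 - \lambda^2)(h_\alpha) \in \{0, \pm 1\}$ for all roots $\alpha$, and $(\lambda^1, \lambda^2)$ is the unique maximal element of $P^+(\lambda, 2)/\!\sim$. -/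
/-- Number of indices `j < i` with `r j` odd. -/
def ocount (n : ℕ) (r : Fin n → ℕ) (i : Fin n) : ℕ :=
  (Finset.univ.filter (fun j => j < i ∧ Odd (r j))).card

/-- The first component `λ¹` of the maximal element of `P⁺(λ,2)` in type `Aₙ`,
where `λ = ∑ rᵢ ωᵢ`: at the `s`-th odd coefficient (in increasing order of index)
the coefficient of `λ¹` is `(rᵢ + (-1)ˢ)/2`, and at even coefficients it is `rᵢ/2`. -/
def lmax1 (n : ℕ) (r : Fin n → ℕ) (i : Fin n) : ℤ :=
  ((r i : ℤ) + (if Odd (r i) then (-1) ^ (ocount n r i) else 0)) / 2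

/-- Evaluation of a weight with coefficients `ν` (in the fundamental weight basis)
on the coroot of the positive root `α_a + α_{a+1} + ⋯ + α_b` of type `Aₙ`. -/
def Ev (n : ℕ) (ν : Fin n → ℤ) (a b : Fin n) : ℤ :=
  ∑ m ∈ Finset.univ.filter (fun m => a ≤ m ∧ m ≤ b), ν m

/-- extension of r to ℕ -/
def Rext (n : ℕ) (r : Fin n → ℕ) (t : ℕ) : ℕ :=
  if h : t < n then r ⟨t, h⟩ else 0

/-- count of odd coefficients below t, ℕ version -/
def Cc (n : ℕ) (r : Fin n → ℕ) (t : ℕ) : ℕ :=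
  ((Finset.range t).filter (fun s => Odd (Rext n r s))).card

lemma Cc_succ (n : ℕ) (r : Fin n → ℕ) (t : ℕ) :
    Cc n r (t + 1) = Cc n r t + (if Odd (Rext n r t) then 1 else 0) := by
  unfold Cc
  rw [Finset.range_add_one, Finset.filter_insert]
  split
  · rw [Finset.card_insert_of_notMem (by simp)]
  · simp

lemma ocount_eq (n : ℕ) (r : Fin n → ℕ) (i : Fin n) : ocount n r i = Cc n r i.val := by
  unfold ocount Cc
  apply Finset.card_bij (fun j _ => j.val)
  · intro j hj
    simp only [Finset.mem_filter, Finset.mem_univ, true_and] at hj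
    simp only [Finset.mem_filter, Finset.mem_range]
    refine ⟨hj.1, ?_⟩
    have : (j.val : ℕ) < n := j.isLt
    simpa [Rext, this] using hj.2
  · intro j _ k _ h
    exact Fin.val_injective h
  · intro s hs
    simp only [Finset.mem_filter, Finset.mem_range] at hs
    have hsn : s < n := lt_of_lt_of_le hs.1 (le_of_lt i.isLt)
    refine ⟨⟨s, hsn⟩, ?_, rfl⟩
    simp only [Finset.mem_filter, Finset.mem_univ, true_and]
    refine ⟨hs.1, ?_⟩
    have := hs.2
    simpa [Rext, hsn] using this

lemma two_mul_lmax1 (n : ℕ) (r : Fin n → ℕ) (i : Fin n) :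
    2 * lmax1 n r i = (r i : ℤ) + (if Odd (r i) then (-1) ^ (ocount n r i) else 0) := by
  unfold lmax1
  apply Int.mul_ediv_cancel'
  split
  · rename_i h
    have h1 : Odd ((r i : ℤ)) := by exact_mod_cast h
    have h2 : Odd ((-1 : ℤ) ^ (ocount n r i)) := Odd.pow ⟨-1, by ring⟩
    exact (h1.add_odd h2).two_dvd
  · rename_i h
    have : Even (r i) := Nat.not_odd_iff_even.mp h
    have : Even ((r i : ℤ)) := by exact_mod_cast this
    simpa using this.two_dvd

/-- the difference function F -/
def Fd (n : ℕ) (r : Fin n → ℕ) (t : ℕ) : ℤ :=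
  if Odd (Rext n r t) then (-1) ^ (Cc n r t) else 0

lemma two_mul_Fd (n : ℕ) (r : Fin n → ℕ) (t : ℕ) :
    2 * Fd n r t = (-1 : ℤ) ^ (Cc n r t) - (-1) ^ (Cc n r (t + 1)) := by
  unfold Fd
  rw [Cc_succ]
  split
  · rw [pow_succ]; ring
  · simp

lemma sum_Fd_range (n : ℕ) (r : Fin n → ℕ) (k : ℕ) :
    ∑ t ∈ Finset.range k, 2 * Fd n r t = 1 - (-1 : ℤ) ^ (Cc n r k) := by
  have := Finset.sum_range_sub' (fun t => (-1 : ℤ) ^ (Cc n r t)) k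
  calc ∑ t ∈ Finset.range k, 2 * Fd n r t
      = ∑ t ∈ Finset.range k, ((-1 : ℤ) ^ (Cc n r t) - (-1) ^ (Cc n r (t + 1))) := by
        exact Finset.sum_congr rfl (fun t _ => two_mul_Fd n r t)
    _ = (-1 : ℤ) ^ (Cc n r 0) - (-1) ^ (Cc n r k) := this
    _ = 1 - (-1 : ℤ) ^ (Cc n r k) := by norm_num [Cc]

lemma Ev_eq_sum_Icc (n : ℕ) (ν : Fin n → ℤ) (a b : Fin n) :
    Ev n ν a b = ∑ t ∈ Finset.Icc a.val b.val, (if h : t < n then ν ⟨t, h⟩ else 0) := by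
  unfold Ev
  have h1 : Finset.univ.filter (fun m => a ≤ m ∧ m ≤ b) = Finset.Icc a b := by
    ext m; simp [Finset.mem_Icc]
  rw [h1, ← Fin.map_valEmbedding_Icc, Finset.sum_map]
  apply Finset.sum_congr rfl
  intro m _
  simp [Fin.valEmbedding, m.isLt]

lemma Ev_add (n : ℕ) (ν μ : Fin n → ℤ) (a b : Fin n) :
    Ev n (fun i => ν i + μ i) a b = Ev n ν a b + Ev n μ a b := by
  unfold Ev; rw [Finset.sum_add_distrib]

lemma abs_Ev_diff (n : ℕ) (r : Fin n → ℕ) (a b : Fin n) (hab : a ≤ b) :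
    |Ev n (fun i => 2 * lmax1 n r i - (r i : ℤ)) a b| ≤ 1 := by
  have key : Ev n (fun i => 2 * lmax1 n r i - (r i : ℤ)) a b
      = ∑ t ∈ Finset.Icc a.val b.val, Fd n r t := by
    rw [Ev_eq_sum_Icc]
    apply Finset.sum_congr rfl
    intro t ht
    rcases Finset.mem_Icc.mp ht with ⟨_, htb⟩
    have htn : t < n := lt_of_le_of_lt htb b.isLt
    rw [dif_pos htn]
    rw [two_mul_lmax1]
    unfold Fd
    have hR : Rext n r t = r ⟨t, htn⟩ := by simp [Rext, htn]
    rw [hR, ocount_eq]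
    split <;> ring
  have h2 : ∑ t ∈ Finset.Icc a.val b.val, 2 * Fd n r t
      = (-1 : ℤ) ^ (Cc n r a.val) - (-1) ^ (Cc n r (b.val + 1)) := by
    have hab' : a.val ≤ b.val + 1 := le_trans hab (Nat.le_succ _)
    rw [← Finset.Ico_add_one_right_eq_Icc, Finset.sum_Ico_eq_sub _ hab',
      sum_Fd_range, sum_Fd_range]
    ring
  have hmul : 2 * |∑ t ∈ Finset.Icc a.val b.val, Fd n r t| ≤ 2 := by
    have habs : |∑ t ∈ Finset.Icc a.val b.val, 2 * Fd n r t| ≤ 2 := by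
      rw [h2]
      have e1 : (-1 : ℤ) ^ (Cc n r a.val) = 1 ∨ (-1 : ℤ) ^ (Cc n r a.val) = -1 := by
        rcases Nat.even_or_odd (Cc n r a.val) with h|h
        · left; exact h.neg_one_pow
        · right; exact h.neg_one_pow
      have e2 : (-1 : ℤ) ^ (Cc n r (b.val+1)) = 1 ∨ (-1 : ℤ) ^ (Cc n r (b.val+1)) = -1 := by
        rcases Nat.even_or_odd (Cc n r (b.val+1)) with h|h
        · left; exact h.neg_one_pow
        · right; exact h.neg_one_pow
      rcases e1 with h1|h1 <;> rcases e2 with h2'|h2' <;> rw [h1, h2'] <;> norm_num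
    rw [← Finset.mul_sum, abs_mul] at habs
    simpa using habs
  rw [key]
  omega


/-- Proposition 5.3 (type `Aₙ`): `λ¹` and `λ² = λ - λ¹` are dominant,
`(λ¹ - λ²)(h_α) ∈ {0, ±1}` for every positive root `α`, and `(λ¹, λ²)` is the
unique maximal element of `P⁺(λ,2)/∼`: every pair `(μ₁, μ₂)` of dominant weights
with `μ₁ + μ₂ = λ` satisfies `(μ₁,μ₂) ⪯ (λ¹,λ²)`. -/
theorem stmt18 (n : ℕ) (hn : 1 ≤ n) (r : Fin n → ℕ) :
    (∀ i, 0 ≤ lmax1 n r i ∧ lmax1 n r i ≤ (r i : ℤ)) ∧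
    (∀ a b : Fin n, a ≤ b →
      |Ev n (fun i => 2 * lmax1 n r i - (r i : ℤ)) a b| ≤ 1) ∧
    (∀ m1 : Fin n → ℤ, (∀ i, 0 ≤ m1 i) → (∀ i, m1 i ≤ (r i : ℤ)) →
      ∀ a b : Fin n, a ≤ b →
        min (Ev n m1 a b) (Ev n (fun i => (r i : ℤ) - m1 i) a b) ≤
          min (Ev n (lmax1 n r) a b) (Ev n (fun i => (r i : ℤ) - lmax1 n r i) a b)) := by
  refine ⟨?_, abs_Ev_diff n r, ?_⟩
  · intro i
    have h := two_mul_lmax1 n r i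
    by_cases hodd : Odd (r i)
    · rw [if_pos hodd] at h
      have hr1 : 1 ≤ (r i : ℤ) := by
        have := hodd.pos
        exact_mod_cast this
      have e1 : (-1 : ℤ) ^ (ocount n r i) = 1 ∨ (-1 : ℤ) ^ (ocount n r i) = -1 := by
        rcases Nat.even_or_odd (ocount n r i) with h'|h'
        · left; exact h'.neg_one_pow
        · right; exact h'.neg_one_pow
      rcases e1 with h1|h1 <;> rw [h1] at h <;> omega
    · rw [if_neg hodd] at h
      have hr0 : 0 ≤ (r i : ℤ) := Int.natCast_nonneg _
      omega
  · intro m1 hpos hle a b hab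
    have hS : Ev n (fun i => (r i : ℤ)) a b = Ev n m1 a b + Ev n (fun i => (r i : ℤ) - m1 i) a b := by
      unfold Ev
      rw [← Finset.sum_add_distrib]
      exact Finset.sum_congr rfl (fun i _ => by ring)
    have hS' : Ev n (fun i => (r i : ℤ)) a b
        = Ev n (lmax1 n r) a b + Ev n (fun i => (r i : ℤ) - lmax1 n r i) a b := by
      unfold Ev
      rw [← Finset.sum_add_distrib]
      exact Finset.sum_congr rfl (fun i _ => by ring)
    have hD : Ev n (fun i => 2 * lmax1 n r i - (r i : ℤ)) a b
        = Ev n (lmax1 n r) a b - Ev n (fun i => (r i : ℤ) - lmax1 n r i) a b := by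
      unfold Ev
      rw [← Finset.sum_sub_distrib]
      exact Finset.sum_congr rfl (fun i _ => by ring)
    have habs := abs_Ev_diff n r a b hab
    rw [hD] at habs
    rw [abs_le] at habs
    omega
end
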